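/- Let N/F be a Galois extension of number fields of odd degree and let 𝒜 be the unique fractional ideal of 𝓞_N with 𝒜² = 𝔇_{N/F}⁻¹. Then 𝒜 is self-dual with respect to the trace form: 𝒜 equals its trace dual 𝒜^∨ = {x ∈ N : Tr_{N/F}(x·a) ∈ 𝓞_F for all a ∈ 𝒜}. -/
import Mathlib

open NumberField
open scoped nonZeroDivisors

/-- The square root of the inverse different is self-dual with respect to the trace form:
`𝒜` equals its trace dual `𝒜^∨ = {x ∈ N : Tr_{N/F}(x·a) ∈ 𝓞 F for all a ∈ 𝒜}`.
(Membership of an element of `F` in `𝓞 F` is expressed as being integral over `ℤ`.) -/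
theorem sqrt_inverse_different_self_dual
    (F N : Type*) [Field F] [Field N] [NumberField F] [NumberField N]
    [Algebra F N] [IsGalois F N] (hodd : Odd (Module.finrank F N))
    (𝒜 : FractionalIdeal (𝓞 N)⁰ N)
    (h𝒜 : 𝒜 ^ 2 = ((differentIdeal (𝓞 F) (𝓞 N) : Ideal (𝓞 N)) :
      FractionalIdeal (𝓞 N)⁰ N)⁻¹) :
    ((𝒜 : Submodule (𝓞 N) N) : Set N)
      = {x : N | ∀ a ∈ ((𝒜 : Submodule (𝓞 N) N) : Set N),
          IsIntegral ℤ (Algebra.trace F N (x * a))} := by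
  have hd : ((differentIdeal (𝓞 F) (𝓞 N) : Ideal (𝓞 N)) : FractionalIdeal (𝓞 N)⁰ N)
      = (FractionalIdeal.dual (𝓞 F) F (1 : FractionalIdeal (𝓞 N)⁰ N))⁻¹ :=
    coeIdeal_differentIdeal (𝓞 F) F N (𝓞 N)
  have hdual1 : 𝒜 ^ 2 = FractionalIdeal.dual (𝓞 F) F (1 : FractionalIdeal (𝓞 N)⁰ N) := by
    rw [h𝒜, hd, inv_inv]
  have hne : 𝒜 ≠ 0 := by
    intro h
    apply FractionalIdeal.dual_ne_zero (𝓞 F) F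
      (one_ne_zero : (1 : FractionalIdeal (𝓞 N)⁰ N) ≠ 0)
    rw [← hdual1, h]; ring
  have hdA : FractionalIdeal.dual (𝓞 F) F 𝒜 = 𝒜 := by
    rw [FractionalIdeal.dual_eq_mul_inv, ← hdual1, sq, mul_assoc,
      mul_inv_cancel₀ hne, mul_one]
  ext x
  have := FractionalIdeal.mem_dual (A := 𝓞 F) (K := F) (I := 𝒜) hne (x := x)
  rw [hdA] at this
  simp only [SetLike.mem_coe, Set.mem_setOf_eq, this, Algebra.traceForm_apply,
    FractionalIdeal.mem_coe]
  refine forall₂_congr fun a _ ↦ ?_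
  constructor
  · rintro ⟨y, hy⟩
    rw [← hy]
    exact (RingOfIntegers.isIntegral_coe y)
  · intro h
    exact ⟨⟨_, h⟩, rfl⟩
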